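/- arXiv:1411.7594 — 2 statements merged into one kernel-verified Lean document; each statement's English description precedes it below -/
import Mathlib

section
/- Let q be an odd prime power and let c ∈ 𝔽_q[x] be a monic squarefree polynomial. Then ω(D(c)) = μ(c)·(−1)^deg(c), where ω is the quadratic character of 𝔽_q^×, D(c) is the discriminant of c, and μ is the Möbius function of 𝔽_q[x] (Pellet's formula). -/
/-!
Let `r₁, …, r_d` be the roots of `c` in an algebraic closure and let `P = ∏_{i<j} (r_j - r_i)` be
their Vandermonde determinant, so that `D = P²`. The Frobenius `x ↦ x^q` permutes the roots by
some `σ`, hence sends `P` to `sign σ • P`; therefore `D^((q-1)/2) = P^(q-1) = sign σ`, and Euler's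
criterion gives `ω(D) = sign σ`. Since the Galois group of a finite extension of `𝔽_q` is generated
by the Frobenius, `σ` acts on the roots of each irreducible factor of degree `n` as one `n`-cycle,
so `sign σ = ∏ (-1)^(n-1) = (-1)^(d + r)`.
-/

open Polynomial UniqueFactorizationMonoid

open scoped Classical

namespace Equiv.Perm

variable {α : Type*} [Fintype α] [DecidableEq α]

theorem sign_eq_neg_one_pow_of_forall_sameCycle {f : Perm α} (hf : ∀ x y, f.SameCycle x y) :
    sign f = (-1) ^ (Fintype.card α - 1) := by
  rcases subsingleton_or_nontrivial α with hα | hα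
  · rw [Subsingleton.elim f 1, sign_one,
      Nat.sub_eq_zero_of_le (Fintype.card_le_one_iff_subsingleton.mpr hα), pow_zero]
  obtain ⟨x, y, hxy⟩ := exists_pair_ne α
  have hmoved : ∀ z, f z ≠ z := fun z hz =>
    hxy (((hf z x).eq_of_left hz).symm.trans ((hf z y).eq_of_left hz))
  have hsupport : f.support = Finset.univ := by
    ext z
    simpa using hmoved z
  obtain ⟨n, hn⟩ := Nat.exists_eq_add_of_lt (Fintype.one_lt_card (α := α))
  rw [IsCycle.sign ⟨x, hmoved x, fun z _ => hf x z⟩, hsupport, Finset.card_univ, hn]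
  simp [pow_succ]

theorem sign_eq_sign_subtypePerm_mul_sign_subtypePerm {f : Perm α} (p : α → Prop)
    [DecidablePred p] (hp : ∀ x, p (f x) ↔ p x) :
    sign f = sign (f.subtypePerm hp) *
      sign (f.subtypePerm (p := fun x => ¬p x) fun x => (hp x).not) := by
  rw [← sign_subtypeCongr]
  congr
  ext x
  by_cases hx : p x <;> simp [hx]

end Equiv.Perm

namespace Finset

theorem prod_offDiag_eq_prod_offDiag_univ {ι α M : Type*} [CommMonoid M] [Fintype ι]
    [DecidableEq ι] [DecidableEq α] {s : Finset α} {v : ι → α} (hv : Function.Injective v)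
    (hs : Set.range v = s) (f : α × α → M) :
    ∏ x ∈ s.offDiag, f x = ∏ x ∈ (univ : Finset ι).offDiag, f (v x.1, v x.2) := by
  have hmem : ∀ i, v i ∈ s := fun i => by rw [← mem_coe, ← hs]; exact Set.mem_range_self i
  refine (prod_nbij (fun x : ι × ι => (v x.1, v x.2)) ?_ ?_ ?_ fun _ _ => rfl).symm
  · intro x hx
    rw [mem_offDiag] at hx ⊢
    exact ⟨hmem _, hmem _, hv.ne hx.2.2⟩
  · intro x _ y _ h
    simp only [Prod.mk.injEq] at h
    exact Prod.ext (hv h.1) (hv h.2)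
  · rintro ⟨a, b⟩ hab
    simp only [coe_offDiag, Set.mem_offDiag, ← hs, Set.mem_range] at hab
    obtain ⟨⟨i, rfl⟩, ⟨j, rfl⟩, hij⟩ := hab
    exact ⟨(i, j), by simpa using fun h => hij (congrArg v h), rfl⟩

theorem filter_product_ne_eq_offDiag {α : Type*} [DecidableEq α] (s : Finset α) :
    (s ×ˢ s).filter (fun x => x.1 ≠ x.2) = s.offDiag := by
  ext
  simp only [mem_filter, mem_product, mem_offDiag, and_assoc]

end Finset

namespace Matrix

open Finset

variable {R : Type*} [CommRing R] {n : ℕ}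

theorem det_vandermonde_eq_prod_filter_lt (v : Fin n → R) :
    (vandermonde v).det = ∏ x ∈ univ ×ˢ univ with x.1 < x.2, (v x.2 - v x.1) := by
  rw [det_vandermonde, prod_filter, prod_product]
  refine prod_congr rfl fun i _ => ?_
  rw [← prod_filter, filter_lt_eq_Ioi]

theorem prod_offDiag_sub_eq_det_vandermonde_sq (v : Fin n → R) :
    ∏ x ∈ (univ : Finset (Fin n)).offDiag, (v x.1 - v x.2) =
      (-1) ^ (n * (n - 1) / 2) * (vandermonde v).det ^ 2 := by
  set T : Finset (Fin n × Fin n) := {x ∈ univ ×ˢ univ | x.1 < x.2}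
  have hdisj : Disjoint T (T.map (Equiv.prodComm _ _).toEmbedding) := by
    rw [disjoint_left]
    simpa [T] using fun _ _ h => h.le
  have hsplit : univ.offDiag = T.disjUnion _ hdisj := by
    ext x
    simp [T]
  have hcard : #T = n * (n - 1) / 2 := by
    rw [card_product_filter_lt, card_univ, Fintype.card_fin, Nat.choose_two_right]
  calc ∏ x ∈ (univ : Finset (Fin n)).offDiag, (v x.1 - v x.2)
      = ∏ x ∈ T, -(v x.2 - v x.1) ^ 2 := by
        rw [hsplit, prod_disjUnion, prod_map, ← prod_mul_distrib]
        refine prod_congr rfl fun x _ => ?_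
        simp only [Equiv.coe_toEmbedding, Equiv.prodComm_apply, Prod.fst_swap, Prod.snd_swap]
        ring
    _ = (-1) ^ (n * (n - 1) / 2) * (vandermonde v).det ^ 2 := by
        rw [det_vandermonde_eq_prod_filter_lt, ← hcard, ← prod_pow, ← prod_const,
          ← prod_mul_distrib]
        simp

theorem neg_one_pow_mul_prod_offDiag_eq_det_vandermonde_sq [DecidableEq R] {s : Finset R}
    {v : Fin n → R} (hv : Function.Injective v) (hs : Set.range v = s) :
    (-1) ^ (n * (n - 1) / 2) * ∏ x ∈ s.offDiag, (x.1 - x.2) = (vandermonde v).det ^ 2 := by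
  rw [prod_offDiag_eq_prod_offDiag_univ hv hs, prod_offDiag_sub_eq_det_vandermonde_sq,
    ← mul_assoc, ← pow_add, Even.neg_one_pow ⟨_, rfl⟩, one_mul]

theorem map_det_vandermonde_of_comp_perm (φ : R →+* R) (v : Fin n → R)
    (τ : Equiv.Perm (Fin n)) (h : ∀ i, φ (v i) = v (τ i)) :
    φ (vandermonde v).det = Equiv.Perm.sign τ * (vandermonde v).det := by
  rw [RingHom.map_det, ← det_permute]
  congr 1
  ext i j
  simp [vandermonde_apply, h]

end Matrix

theorem quadraticChar_eq_of_algebraMap_eq_sq {F K : Type*} [Field F] [Fintype F] [DecidableEq F]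
    [Field K] [Algebra F K] (hF : ringChar F ≠ 2) {D : F} {P : K} (hP : P ≠ 0)
    (hD : algebraMap F K D = P ^ 2) {ε : ℤˣ} (hε : P ^ Fintype.card F = (ε : ℤ) * P) :
    quadraticChar F D = ε := by
  have hPε : P ^ (Fintype.card F - 1) = (ε : ℤ) := by
    refine mul_right_cancel₀ hP ?_
    rw [← pow_succ, Nat.sub_add_cancel Fintype.card_pos, hε]
  have hcast : ((quadraticChar F D : ℤ) : F) = ((ε : ℤ) : F) := by
    apply (algebraMap F K).injective
    rw [quadraticChar_eq_pow_of_char_ne_two' hF, map_pow, hD, ← pow_mul, map_intCast,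
      Nat.two_mul_odd_div_two (FiniteField.odd_card_of_char_ne_two hF), hPε]
  refine Int.cast_injOn_of_ringChar_ne_two hF ?_ ?_ hcast
  · rcases eq_or_ne D 0 with rfl | hD0
    · simp
    · rcases quadraticChar_dichotomy hD0 with h | h <;> simp [h]
  · rcases Int.units_eq_one_or ε with rfl | rfl <;> simp

namespace Polynomial

section RootSet

variable {F K : Type*} [Field F] [Field K] [Algebra F K]

theorem disjoint_rootSet_of_isRelPrime {p q : F[X]} (h : IsRelPrime p q) :
    Disjoint (p.rootSet K) (q.rootSet K) :=
  Set.disjoint_left.mpr fun x hp hq => minpoly.not_isUnit F x <|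
    h (minpoly.dvd F x (aeval_eq_zero_of_mem_rootSet hp))
      (minpoly.dvd F x (aeval_eq_zero_of_mem_rootSet hq))

theorem neg_one_pow_mul_prod_offDiag_aroots_eq_det_vandermonde_sq [DecidableEq K] {p : F[X]}
    {n : ℕ} (e : Fin n ≃ p.rootSet K) :
    (-1) ^ (n * (n - 1) / 2) * ∏ x ∈ (p.aroots K).toFinset.offDiag, (x.1 - x.2) =
      (Matrix.vandermonde fun i => (e i : K)).det ^ 2 := by
  refine Matrix.neg_one_pow_mul_prod_offDiag_eq_det_vandermonde_sq
    (Subtype.val_injective.comp e.injective) ?_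
  rw [← rootSet_def]
  exact (e.surjective.range_comp _).trans Subtype.range_coe

theorem map_det_vandermonde_rootSet (σ : K ≃ₐ[F] K) {p : F[X]} {n : ℕ}
    (e : Fin n ≃ p.rootSet K) :
    σ (Matrix.vandermonde fun i => (e i : K)).det =
      Equiv.Perm.sign (MulAction.toPerm σ : Equiv.Perm (p.rootSet K)) *
        (Matrix.vandermonde fun i => (e i : K)).det := by
  rw [← Equiv.Perm.sign_permCongr e.symm]
  exact Matrix.map_det_vandermonde_of_comp_perm (σ : K →+* K) _ _ fun i => by
    simp [Equiv.permCongr_apply]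

theorem sign_toPerm_rootSet_of_isUnit (σ : K ≃ₐ[F] K) {u : F[X]} (hu : IsUnit u) :
    Equiv.Perm.sign (MulAction.toPerm σ : Equiv.Perm (u.rootSet K)) = 1 := by
  obtain ⟨a, -, rfl⟩ := Polynomial.isUnit_iff.mp hu
  have : IsEmpty ((C a).rootSet K) := by simp
  rw [Subsingleton.elim (MulAction.toPerm σ) 1, Equiv.Perm.sign_one]

theorem sign_toPerm_rootSet_mul (σ : K ≃ₐ[F] K) {p q : F[X]} (hpq : p * q ≠ 0)
    (hdisj : Disjoint (p.rootSet K) (q.rootSet K)) :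
    Equiv.Perm.sign (MulAction.toPerm σ : Equiv.Perm ((p * q).rootSet K)) =
      Equiv.Perm.sign (MulAction.toPerm σ : Equiv.Perm (p.rootSet K)) *
        Equiv.Perm.sign (MulAction.toPerm σ : Equiv.Perm (q.rootSet K)) := by
  have hmem : ∀ x, x ∈ (p * q).rootSet K ↔ x ∈ p.rootSet K ∨ x ∈ q.rootSet K := fun x => by
    simp [mem_rootSet, hpq, left_ne_zero_of_mul hpq, right_ne_zero_of_mul hpq]
  have hmem' : ∀ x, x ∈ (p * q).rootSet K ∧ x ∉ p.rootSet K ↔ x ∈ q.rootSet K := fun x => by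
    have := @Set.disjoint_right.mp hdisj x
    rw [hmem]
    tauto
  rw [Equiv.Perm.sign_eq_sign_subtypePerm_mul_sign_subtypePerm
    (fun x : (p * q).rootSet K => (x : K) ∈ p.rootSet K) fun x => smul_mem_rootSet_iff]
  congr 1
  · exact Equiv.Perm.sign_eq_sign_of_equiv _ _
      (Equiv.subtypeSubtypeEquivSubtype fun hx => (hmem _).mpr (Or.inl hx)) fun _ => rfl
  · exact Equiv.Perm.sign_eq_sign_of_equiv _ _
      ((Equiv.subtypeSubtypeEquivSubtypeInter _ _).trans (Equiv.subtypeEquivRight hmem'))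
      fun _ => rfl

end RootSet

section Frobenius

open FiniteField

variable {F K : Type*} [Field F] [Fintype F] [Field K] [Algebra F K] [Algebra.IsAlgebraic F K]

theorem Gal.restrict_frobeniusAlgEquivOfAlgebraic (p : F[X])
    [Fact (p.map (algebraMap F K)).Splits] :
    Gal.restrict p K (frobeniusAlgEquivOfAlgebraic F K) =
      frobeniusAlgEquivOfAlgebraic F p.SplittingField := by
  ext y
  apply (algebraMap p.SplittingField K).injective
  exact (AlgEquiv.restrictNormal_commutes (frobeniusAlgEquivOfAlgebraic F K) _ y).trans
    (map_pow _ y _).symm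

variable [IsAlgClosed K]

theorem exists_frobenius_pow_smul_eq {p : F[X]} (hp : Irreducible p) (x y : p.rootSet K) :
    ∃ n : ℕ, frobeniusAlgEquivOfAlgebraic F K ^ n • x = y := by
  have : Fact (p.map (algebraMap F K)).Splits := ⟨IsAlgClosed.splits _⟩
  obtain ⟨g, rfl⟩ := (Gal.galAction_isPretransitive p K hp).exists_smul_eq x y
  obtain ⟨n, rfl⟩ := (bijective_frobeniusAlgEquivOfAlgebraic_pow F p.SplittingField).2 g
  refine ⟨n, Subtype.ext ((Gal.restrict_smul _ x).symm.trans ?_)⟩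
  rw [map_pow, Gal.restrict_frobeniusAlgEquivOfAlgebraic]
  rfl

theorem sign_toPerm_frobenius_rootSet_of_irreducible {p : F[X]} (hp : Irreducible p) :
    Equiv.Perm.sign
      (MulAction.toPerm (frobeniusAlgEquivOfAlgebraic F K) : Equiv.Perm (p.rootSet K)) =
      (-1) ^ (p.natDegree - 1) := by
  rw [Equiv.Perm.sign_eq_neg_one_pow_of_forall_sameCycle, card_rootSet_eq_natDegree
    (PerfectField.separable_of_irreducible hp) (IsAlgClosed.splits _)]
  intro x y
  obtain ⟨n, hn⟩ := exists_frobenius_pow_smul_eq hp x y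
  refine ⟨n, ?_⟩
  rw [zpow_natCast, ← MulAction.toPermHom_apply, ← map_pow, MulAction.toPermHom_apply]
  exact hn

theorem sign_toPerm_frobenius_rootSet {c : F[X]} (hc : Squarefree c) :
    Equiv.Perm.sign
      (MulAction.toPerm (frobeniusAlgEquivOfAlgebraic F K) : Equiv.Perm (c.rootSet K)) =
      (-1) ^ (c.natDegree + Multiset.card (normalizedFactors c)) := by
  have hunit : ∀ {u : F[X]}, IsUnit u → Equiv.Perm.sign
      (MulAction.toPerm (frobeniusAlgEquivOfAlgebraic F K) : Equiv.Perm (u.rootSet K)) =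
        (-1) ^ (u.natDegree + Multiset.card (normalizedFactors u)) := fun hu => by
    rw [sign_toPerm_rootSet_of_isUnit _ hu, natDegree_eq_zero_of_isUnit hu,
      normalizedFactors_of_isUnit hu, Multiset.card_zero, pow_zero]
  induction c using induction_on_coprime with
  | h0 => exact absurd hc not_squarefree_zero
  | h1 hu => exact hunit hu
  | @hpr p i hp =>
    rcases i with _ | _ | i
    · exact hunit (pow_zero p ▸ isUnit_one)
    · have := hp.irreducible.natDegree_pos
      rw [pow_one, sign_toPerm_frobenius_rootSet_of_irreducible hp.irreducible,
        normalizedFactors_irreducible hp.irreducible, Multiset.card_singleton,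
        show p.natDegree + 1 = p.natDegree - 1 + 2 by omega, pow_add, neg_one_sq, mul_one]
    · exact absurd (hc p ⟨p ^ i, by ring⟩) hp.not_isUnit
  | @hcp x y hxy ihx ihy =>
    have hx := left_ne_zero_of_mul hc.ne_zero
    have hy := right_ne_zero_of_mul hc.ne_zero
    rw [sign_toPerm_rootSet_mul _ hc.ne_zero (disjoint_rootSet_of_isRelPrime hxy),
      ihx hc.of_mul_left, ihy hc.of_mul_right, natDegree_mul hx hy,
      normalizedFactors_mul hx hy, Multiset.card_add, ← pow_add]
    congr 1
    ring

end Frobenius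

end Polynomial

theorem pellet_formula_general (F : Type*) [Field F] [Fintype F] (q : ℕ)
    (hq : Fintype.card F = q) (hq' : ∃ p k : ℕ, p.Prime ∧ Odd p ∧ 0 < k ∧ q = p ^ k)
    (c : Polynomial F) (hsf : Squarefree c) (D : F)
    (hD : algebraMap F (AlgebraicClosure F) D =
      (-1) ^ (c.natDegree * (c.natDegree - 1) / 2) *
        ∏ p ∈ (((c.map (algebraMap F (AlgebraicClosure F))).roots.toFinset ×ˢ
            (c.map (algebraMap F (AlgebraicClosure F))).roots.toFinset).filter
            (fun p : AlgebraicClosure F × AlgebraicClosure F => p.1 ≠ p.2)),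
          (p.1 - p.2)) :
    (if IsSquare D then (1 : ℤ) else -1) =
      (-1) ^ Multiset.card (normalizedFactors c) * (-1) ^ c.natDegree := by
  set K := AlgebraicClosure F
  have hF : ringChar F ≠ 2 := by
    obtain ⟨p, k, -, hp, -, rfl⟩ := hq'
    rw [Ne, FiniteField.even_card_iff_char_two, hq, ← Nat.even_iff, Nat.not_even_iff_odd]
    exact hp.pow
  let e : Fin c.natDegree ≃ c.rootSet K := (Fintype.equivFinOfCardEq
    (card_rootSet_eq_natDegree (PerfectField.separable_iff_squarefree.mpr hsf)
      (IsAlgClosed.splits _))).symm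
  set P := (Matrix.vandermonde fun i => (e i : K)).det
  have hP : P ≠ 0 :=
    Matrix.det_vandermonde_ne_zero_iff.mpr (Subtype.val_injective.comp e.injective)
  have hDP : algebraMap F K D = P ^ 2 := by
    rw [hD, ← aroots_def, Finset.filter_product_ne_eq_offDiag,
      neg_one_pow_mul_prod_offDiag_aroots_eq_det_vandermonde_sq]
  have hPq : P ^ Fintype.card F = Equiv.Perm.sign (MulAction.toPerm
      (FiniteField.frobeniusAlgEquivOfAlgebraic F K) : Equiv.Perm (c.rootSet K)) * P :=
    map_det_vandermonde_rootSet (FiniteField.frobeniusAlgEquivOfAlgebraic F K) e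
  have hD0 : D ≠ 0 := by
    rintro rfl
    exact hP (pow_eq_zero_iff two_ne_zero |>.mp (by simpa using hDP.symm))
  rw [show (if IsSquare D then (1 : ℤ) else -1) = quadraticChar F D by
      simp [quadraticChar_apply, quadraticCharFun, hD0],
    quadraticChar_eq_of_algebraMap_eq_sq hF hP hDP hPq, sign_toPerm_frobenius_rootSet hsf, pow_add]
  push_cast
  ring

/-- **Pellet's formula.**  Let `F` be a finite field with `q` elements, `q` an odd prime
power, and let `c ∈ F[x]` be monic and squarefree of degree `d`.  Let `D` be the
discriminant of `c`, i.e. the element of `F` whose image in an algebraic closure equals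
`(-1)^(d(d-1)/2) ∏_{i ≠ j} (rᵢ - rⱼ)`, the product taken over ordered pairs of distinct
roots of `c`.  Then `ω(D) = μ(c)·(-1)^d`, where `ω(a) = 1` if `a` is a square and `-1`
otherwise, and `μ(c) = (-1)^r` with `r` the number of (distinct) monic irreducible
factors of `c`. -/
theorem pellet_formula (F : Type*) [Field F] [Fintype F] (q : ℕ)
    (hq : Fintype.card F = q) (hq' : ∃ p k : ℕ, p.Prime ∧ Odd p ∧ 0 < k ∧ q = p ^ k)
    (c : Polynomial F) (hc : c.Monic) (hsf : Squarefree c) (D : F)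
    (hD : algebraMap F (AlgebraicClosure F) D =
      (-1) ^ (c.natDegree * (c.natDegree - 1) / 2) *
        ∏ p ∈ (((c.map (algebraMap F (AlgebraicClosure F))).roots.toFinset ×ˢ
            (c.map (algebraMap F (AlgebraicClosure F))).roots.toFinset).filter
            (fun p : AlgebraicClosure F × AlgebraicClosure F => p.1 ≠ p.2)),
          (p.1 - p.2)) :
    (if IsSquare D then (1 : ℤ) else -1) =
      (-1) ^ Multiset.card (normalizedFactors c) * (-1) ^ c.natDegree :=
  pellet_formula_general F q hq hq' c hsf D hD
end

section
/- Let q be an odd prime power and n | q − 1 with n even or odd, and let χ(x) = x^((q−1)/n) on 𝔽_q^×. For c ∈ 𝔽_q[x] monic with distinct roots in an algebraic closure, the n-th power residue symbol of the derivative satisfies (c'/c)_n = χ(D(c)) if deg(c) ≡ 0, 1 (mod 4) and (c'/c)_n = χ(−D(c)) if deg(c) ≡ 2, 3 (mod 4), where D(c) is the discriminant of c. -/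
/-!
Everything is computed in an algebraic closure of `𝔽_q`. For an irreducible factor `π` of `c`
of degree `m`, the field `𝔽_q[x]/(π)` has `q^m` elements and its norm to `𝔽_q` is
`x ↦ x^((q^m - 1)/(q - 1))`, so the congruence defining `(c'/π)_n` says that
`(c'/π)_n = χ(N(c' mod π))`, where the norm is the product of `c'` over the roots of `π`.
Multiplying over the factors, `(c'/c)_n = χ(∏_{c(r) = 0} c'(r))`, and for monic `c` with simple
roots `c'(r) = ∏_{s ≠ r} (r - s)`. The product over ordered pairs of distinct roots is
`(-1)^(d(d-1)/2) D(c)`, and `d(d-1)/2` is even exactly when `d ≡ 0, 1 (mod 4)`.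
-/

open Polynomial UniqueFactorizationMonoid

open scoped Classical

theorem FiniteField.pow_card_sub_one_div_eq_algebraMap_norm_pow {K L : Type*} [Field K] [Field L]
    [Algebra K L] [Finite L] {n : ℕ} (hn : n ∣ Nat.card K - 1) (x : L) :
    x ^ ((Nat.card L - 1) / n) = algebraMap K L (Algebra.norm K x ^ ((Nat.card K - 1) / n)) := by
  have := Finite.of_injective _ (algebraMap K L).injective
  have hKL : Nat.card K - 1 ∣ Nat.card L - 1 := by
    rw [Module.natCard_eq_pow_finrank (K := K) (V := L)]
    exact Nat.sub_one_dvd_pow_sub_one _ _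
  rw [map_pow, FiniteField.algebraMap_norm_eq_pow, ← pow_mul, Nat.div_mul_div hKL hn]

theorem AdjoinRoot.algebraMap_norm_mk {K E : Type*} [Field K] [PerfectField K] [Field E]
    [Algebra K E] [IsAlgClosed E] {π : K[X]} [Fact (Irreducible π)] (hπ : π.Monic) (a : K[X]) :
    algebraMap K E (Algebra.norm K (AdjoinRoot.mk π a)) = ((π.aroots E).map (aeval · a)).prod := by
  let pb := AdjoinRoot.powerBasis hπ.ne_zero
  have : Module.Finite K (AdjoinRoot π) := pb.finite
  have hgen : minpoly K pb.gen = π := AdjoinRoot.minpoly_powerBasis_gen_of_monic hπ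
  have hnodup : (π.aroots E).Nodup :=
    nodup_roots (PerfectField.separable_of_irreducible Fact.out).map
  calc algebraMap K E (Algebra.norm K (AdjoinRoot.mk π a))
      = ∏ σ : AdjoinRoot π →ₐ[K] E, aeval (σ pb.gen) a := by
        rw [Algebra.norm_eq_prod_embeddings]
        refine Finset.prod_congr rfl fun σ _ => ?_
        rw [show pb.gen = AdjoinRoot.root π from rfl, aeval_algHom_apply, AdjoinRoot.aeval_eq]
    _ = ∏ r : {r // r ∈ π.aroots E}, aeval (r : E) a :=
        Fintype.prod_equiv (pb.liftEquiv'.trans (Equiv.subtypeEquivRight (by simp [hgen]))) _ _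
          fun σ => by simp [PowerBasis.liftEquiv'_apply_coe]
    _ = ((π.aroots E).map (aeval · a)).prod := by
        rw [Finset.prod_mem_multiset _ _ (aeval · a) (fun _ => rfl), Finset.prod_eq_multiset_prod,
          Multiset.toFinset_val, Multiset.dedup_eq_self.mpr hnodup]

theorem FiniteField.algebraMap_eq_prod_aroots_pow_of_dvd {F E : Type*} [Field F] [Finite F]
    [Field E] [Algebra F E] [IsAlgClosed E] {n : ℕ} (hn : n ∣ Nat.card F - 1) {π a : F[X]}
    (hπ : π.Monic) (hirr : Irreducible π) {s : F}
    (hs : π ∣ a ^ ((Nat.card F ^ π.natDegree - 1) / n) - C s) :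
    algebraMap F E s = ((π.aroots E).map (aeval · a)).prod ^ ((Nat.card F - 1) / n) := by
  have : Fact (Irreducible π) := ⟨hirr⟩
  let pb := AdjoinRoot.powerBasis hπ.ne_zero
  have : Module.Finite F (AdjoinRoot π) := pb.finite
  have : Finite (AdjoinRoot π) := Module.finite_of_finite F
  have hcard : Nat.card (AdjoinRoot π) = Nat.card F ^ π.natDegree := by
    rw [Module.natCard_eq_pow_finrank (K := F), pb.finrank, AdjoinRoot.powerBasis_dim]
  have hroot : AdjoinRoot.mk π a ^ ((Nat.card (AdjoinRoot π) - 1) / n) = AdjoinRoot.of π s := by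
    rw [hcard, ← map_pow, ← AdjoinRoot.mk_C, ← sub_eq_zero, ← map_sub]
    exact AdjoinRoot.mk_eq_zero.mpr hs
  rw [FiniteField.pow_card_sub_one_div_eq_algebraMap_norm_pow hn, ← AdjoinRoot.algebraMap_eq]
    at hroot
  rw [← (algebraMap F (AdjoinRoot π)).injective hroot, map_pow, AdjoinRoot.algebraMap_norm_mk hπ]

theorem Polynomial.aroots_eq_bind_normalizedFactors {K E : Type*} [Field K] [CommRing E]
    [IsDomain E] [Algebra K E] (c : K[X]) :
    c.aroots E = (normalizedFactors c).bind (·.aroots E) := by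
  rcases eq_or_ne c 0 with rfl | hc
  · simp
  conv_lhs => rw [← leadingCoeff_mul_prod_normalizedFactors c]
  rw [aroots_C_mul _ (leadingCoeff_ne_zero.mpr hc), aroots_def, Polynomial.map_multiset_prod,
    roots_multiset_prod, Multiset.bind_map]
  simp only [Multiset.mem_map, Polynomial.map_eq_zero, not_exists, not_and]
  exact fun π hπ => ne_zero_of_mem_normalizedFactors hπ

theorem Polynomial.Splits.prod_eval_derivative_roots {E : Type*} [Field E] {f : E[X]}
    (hf : f.Splits) (hm : f.Monic) (hnd : f.roots.Nodup) :
    (f.roots.map (eval · f.derivative)).prod =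
      ∏ p ∈ f.roots.toFinset ×ˢ f.roots.toFinset with p.1 ≠ p.2, (p.1 - p.2) := by
  have hprod (g : E → E) : (f.roots.map g).prod = ∏ r ∈ f.roots.toFinset, g r := by
    rw [Finset.prod_eq_multiset_prod, Multiset.toFinset_val, Multiset.dedup_eq_self.mpr hnd]
  rw [Multiset.map_congr rfl fun r hr => hf.eval_root_derivative hm hr, hprod,
    Finset.prod_filter, Finset.prod_product]
  refine Finset.prod_congr rfl fun r _ => ?_
  rw [hnd.erase_eq_filter, ← Finset.prod_filter, Finset.prod_eq_multiset_prod, Finset.filter_val,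
    Multiset.toFinset_val, Multiset.dedup_eq_self.mpr hnd]
  simp only [ne_comm]

theorem Nat.even_choose_two_iff (d : ℕ) : Even (d.choose 2) ↔ d % 4 = 0 ∨ d % 4 = 1 := by
  induction d using Nat.strong_induction_on with
  | _ d ih =>
    match d with
    | 0 | 1 | 2 | 3 => decide
    | d + 4 =>
      have hstep : (d + 4).choose 2 = d.choose 2 + 2 * (2 * d + 3) := by
        simp only [Nat.choose_succ_succ', Nat.choose_zero_right, Nat.choose_one_right, zero_add]
        ring
      rw [hstep, Nat.even_add, ih d (by omega)]
      simp only [even_two_mul, iff_true]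
      omega

theorem neg_one_pow_mul_sub_one_div_two {R : Type*} [Monoid R] [HasDistribNeg R] (d : ℕ) :
    (-1 : R) ^ (d * (d - 1) / 2) = if d % 4 = 0 ∨ d % 4 = 1 then 1 else -1 := by
  rw [← Nat.choose_two_right]
  split_ifs with h
  · exact ((Nat.even_choose_two_iff d).mpr h).neg_one_pow
  · exact (Nat.not_even_iff_odd.mp (mt (Nat.even_choose_two_iff d).mp h)).neg_one_pow

theorem residue_symbol_of_derivative_general (F : Type*) [Field F] [Fintype F] (q n : ℕ)
    (hq : Fintype.card F = q)
    (hdvd : n ∣ q - 1)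
    (sym : Polynomial F → Polynomial F → F)
    (hsym : ∀ a π : Polynomial F, π.Monic → Irreducible π → ¬ π ∣ a →
      (sym a π) ^ n = 1 ∧
        π ∣ (a ^ ((q ^ π.natDegree - 1) / n) - Polynomial.C (sym a π)))
    (c : Polynomial F) (hc : c.Monic) (hsf : Squarefree c) (D : F)
    (hD : algebraMap F (AlgebraicClosure F) D =
      (-1) ^ (c.natDegree * (c.natDegree - 1) / 2) *
        ∏ p ∈ (((c.map (algebraMap F (AlgebraicClosure F))).roots.toFinset ×ˢ
            (c.map (algebraMap F (AlgebraicClosure F))).roots.toFinset).filter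
            (fun p : AlgebraicClosure F × AlgebraicClosure F => p.1 ≠ p.2)),
          (p.1 - p.2)) :
    (∏ π ∈ (normalizedFactors c).toFinset, sym c.derivative π) =
      (if c.natDegree % 4 = 0 ∨ c.natDegree % 4 = 1 then D else -D) ^ ((q - 1) / n) := by
  obtain rfl : Nat.card F = q := by rwa [Nat.card_eq_fintype_card]
  have hsep : c.Separable := PerfectField.separable_iff_squarefree.mpr hsf
  have hsymbol : ∀ π ∈ normalizedFactors c,
      algebraMap F (AlgebraicClosure F) (sym c.derivative π) =
        ((π.aroots (AlgebraicClosure F)).map (aeval · c.derivative)).prod ^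
          ((Nat.card F - 1) / n) := by
    intro π hπ
    have hirr : Irreducible π := irreducible_of_normalized_factor π hπ
    have hmon : π.Monic := ((Polynomial.mem_normalizedFactors_iff hc.ne_zero).mp hπ).2.1
    have hcoprime : ¬ π ∣ c.derivative := fun h =>
      hirr.not_isUnit (hsep.isUnit_of_dvd' (dvd_of_mem_normalizedFactors hπ) h)
    exact FiniteField.algebraMap_eq_prod_aroots_pow_of_dvd hdvd hmon hirr
      (hsym _ π hmon hirr hcoprime).2
  have hderiv : ((c.aroots (AlgebraicClosure F)).map (aeval · c.derivative)).prod =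
      algebraMap F (AlgebraicClosure F)
        (if c.natDegree % 4 = 0 ∨ c.natDegree % 4 = 1 then D else -D) := by
    rw [apply_ite (algebraMap _ _), map_neg, hD, neg_one_pow_mul_sub_one_div_two, aroots_def,
      ← (IsAlgClosed.splits _).prod_eval_derivative_roots (hc.map _) (nodup_roots hsep.map)]
    split_ifs <;> simp [derivative_map, aeval_def, eval_map]
  apply (algebraMap F (AlgebraicClosure F)).injective
  rw [map_prod, Finset.prod_eq_multiset_prod, Multiset.toFinset_val,
    Multiset.dedup_eq_self.mpr ((squarefree_iff_nodup_normalizedFactors hc.ne_zero).mp hsf),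
    Multiset.map_congr rfl hsymbol, Multiset.prod_map_pow, ← Multiset.prod_bind,
    ← Multiset.map_bind, ← aroots_eq_bind_normalizedFactors, hderiv, map_pow]

/-- Let `F = 𝔽_q` with `q` an odd prime power, `n ∣ q - 1`, and `χ(a) = a^((q-1)/n)`.
Let `c ∈ F[x]` be monic squarefree of degree `d`, with discriminant `D` (the element of
`F` whose image in an algebraic closure is `(-1)^(d(d-1)/2) ∏_{i≠j}(rᵢ - rⱼ)` over the
roots of `c`).  Let `sym a π = (a/π)_n` denote the `n`-th power residue symbol: the
unique `n`-th root of unity congruent to `a^((q^{deg π}-1)/n)` mod `π`, extended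
multiplicatively to `(c'/c)_n = ∏_{π ∣ c} (c'/π)_n`.  Then
`(c'/c)_n = χ(D)` if `d ≡ 0, 1 (mod 4)` and `(c'/c)_n = χ(-D)` if `d ≡ 2, 3 (mod 4)`. -/
theorem residue_symbol_of_derivative (F : Type*) [Field F] [Fintype F] (q n : ℕ)
    (hq : Fintype.card F = q) (hq' : ∃ p k : ℕ, p.Prime ∧ Odd p ∧ 0 < k ∧ q = p ^ k)
    (hn : 0 < n) (hdvd : n ∣ q - 1)
    (sym : Polynomial F → Polynomial F → F)
    (hsym : ∀ a π : Polynomial F, π.Monic → Irreducible π → ¬ π ∣ a →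
      (sym a π) ^ n = 1 ∧
        π ∣ (a ^ ((q ^ π.natDegree - 1) / n) - Polynomial.C (sym a π)))
    (c : Polynomial F) (hc : c.Monic) (hsf : Squarefree c) (D : F)
    (hD : algebraMap F (AlgebraicClosure F) D =
      (-1) ^ (c.natDegree * (c.natDegree - 1) / 2) *
        ∏ p ∈ (((c.map (algebraMap F (AlgebraicClosure F))).roots.toFinset ×ˢ
            (c.map (algebraMap F (AlgebraicClosure F))).roots.toFinset).filter
            (fun p : AlgebraicClosure F × AlgebraicClosure F => p.1 ≠ p.2)),
          (p.1 - p.2)) :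
    (∏ π ∈ (normalizedFactors c).toFinset, sym c.derivative π) =
      (if c.natDegree % 4 = 0 ∨ c.natDegree % 4 = 1 then D else -D) ^ ((q - 1) / n) :=
  residue_symbol_of_derivative_general F q n hq hdvd sym hsym c hc hsf D hD
end
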